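/- (Universality transfer through an injective feature map.) Let M be a nonempty compact metric space, let n ∈ ℕ, and let φ : M → ℝⁿ be continuous and injective. Let 𝒮 be a set of continuous functions from ℝⁿ to ℝ that is dense in the topology of uniform convergence on compact sets: for every compact K ⊆ ℝⁿ, every continuous g : ℝⁿ → ℝ, and every ε > 0, there exists f ∈ 𝒮 with sup_{u ∈ K} |g(u) − f(u)| ≤ ε. Then the pullback class {f ∘ φ : f ∈ 𝒮} is dense in C(M, ℝ) for the uniform norm: for every continuous h : M → ℝ and every ε > 0 there exists f ∈ 𝒮 with sup_{x ∈ M} |h(x) − f(φ(x))| ≤ ε. -/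
import Mathlib


/-- **Universality transfer through an injective feature map.**
Let `M` be a nonempty compact metric space and `φ : M → ℝⁿ` continuous and injective. If `𝒮`
is a set of continuous functions `ℝⁿ → ℝ` dense for uniform convergence on compact sets, then
the pullback class `{f ∘ φ : f ∈ 𝒮}` is dense in `C(M, ℝ)` for the uniform norm. -/
theorem universality_transfer
    {M : Type*} [MetricSpace M] [CompactSpace M] [Nonempty M]
    (n : ℕ) (φ : M → (Fin n → ℝ))
    (hφc : Continuous φ) (hφi : Function.Injective φ)
    (S : Set ((Fin n → ℝ) → ℝ))
    (hScont : ∀ f ∈ S, Continuous f)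
    (hdense : ∀ K : Set (Fin n → ℝ), IsCompact K →
      ∀ g : (Fin n → ℝ) → ℝ, Continuous g →
        ∀ ε : ℝ, 0 < ε → ∃ f ∈ S, ∀ u ∈ K, |g u - f u| ≤ ε) :
    ∀ h : M → ℝ, Continuous h →
      ∀ ε : ℝ, 0 < ε → ∃ f ∈ S, ∀ x : M, |h x - f (φ x)| ≤ ε := by
  intro h hc ε hε
  have he := hφc.isClosedEmbedding hφi
  obtain ⟨g, hg⟩ := ContinuousMap.exists_extension' he ⟨h, hc⟩
  obtain ⟨f, hfS, hf⟩ := hdense (Set.range φ) (isCompact_range hφc) g g.continuous ε hε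
  refine ⟨f, hfS, fun x => ?_⟩
  have := hf (φ x) ⟨x, rfl⟩
  have hx : g (φ x) = h x := congrFun hg x
  rwa [hx] at this
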